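/- arXiv:2009.01515 — 3 statements merged into one kernel-verified Lean document; each statement's English description precedes it below -/
import Mathlib

section
/- Let $n \ge 5$ and $x \in \mathbb{R}^n$. There exists a constant $C = C(n) > 0$ such that $\int_{\mathbb{R}^n} |x - z|^{2-n}\, (1+|z|)^{-n-2}\, dz \le C\, (1+|x|)^{2-n}$. -/
/-!
Put `δ = (1 + ‖x‖) / 2`. On the ball `‖x - z‖ < δ` one has `1 + ‖z‖ ≥ δ`, and the singular factor
integrates in polar coordinates to a multiple of `δ ^ (d - a)`; off this ball `‖x - z‖ ^ (-a) ≤ δ ^ (-a)`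
and `(1 + ‖z‖) ^ (-b)` is integrable because `b > d`. Both pieces are therefore `O(δ ^ (-a))`,
using `δ ≥ 1 / 2` for the first.
-/

open MeasureTheory Metric Set Module

lemma Real.pow_sub_one_mul_rpow {y : ℝ} (hy : 0 < y) {k : ℕ} (hk : 1 ≤ k) (s : ℝ) :
    y ^ (k - 1) * y ^ s = y ^ (s + k - 1) := by
  rw [← Real.rpow_natCast, ← Real.rpow_add hy, Nat.cast_sub hk]
  ring_nf

section NormedGroup

variable {E : Type*} [NormedAddCommGroup E]

lemma norm_sub_rpow_mul_one_add_norm_rpow_le {a b δ : ℝ} (ha : 0 ≤ a) (hb : 0 ≤ b) (hδ : 0 < δ)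
    {x : E} (hδx : 2 * δ ≤ 1 + ‖x‖) (z : E) :
    ‖x - z‖ ^ (-a) * (1 + ‖z‖) ^ (-b) ≤
      δ ^ (-b) * (ball 0 δ).indicator (fun w ↦ ‖w‖ ^ (-a)) (x - z) + δ ^ (-a) * (1 + ‖z‖) ^ (-b) := by
  have hfar := Real.rpow_nonneg (by positivity : (0 : ℝ) ≤ 1 + ‖z‖) (-b)
  by_cases hxz : x - z ∈ ball (0 : E) δ
  · rw [mem_ball_zero_iff] at hxz
    have hnear : (1 + ‖z‖) ^ (-b) ≤ δ ^ (-b) :=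
      Real.rpow_le_rpow_of_nonpos hδ (by linarith [norm_sub_norm_le x z]) (by linarith)
    rw [indicator_of_mem (mem_ball_zero_iff.2 hxz)]
    nlinarith [Real.rpow_nonneg (norm_nonneg (x - z)) (-a), Real.rpow_nonneg hδ.le (-a)]
  · rw [mem_ball_zero_iff, not_lt] at hxz
    rw [indicator_of_notMem (by rwa [mem_ball_zero_iff, not_lt]), mul_zero, zero_add]
    exact mul_le_mul_of_nonneg_right (Real.rpow_le_rpow_of_nonpos hδ hxz (by linarith)) hfar

end NormedGroup

section HaarMeasure

variable {E : Type*} [NormedAddCommGroup E] [NormedSpace ℝ E] [FiniteDimensional ℝ E]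
  [MeasurableSpace E] [BorelSpace E] (μ : Measure E) [μ.IsAddHaarMeasure]

section Nontrivial

variable [Nontrivial E]

lemma integrableOn_ball_norm_rpow {s : ℝ} (hs : -(finrank ℝ E : ℝ) < s) (r : ℝ) :
    IntegrableOn (fun w : E ↦ ‖w‖ ^ s) (ball 0 r) μ := by
  rw [integrableOn_fun_norm_addHaar μ (f := fun y ↦ y ^ s)]
  rcases le_or_gt r 0 with hr | hr
  · simp [Ioo_eq_empty_of_le hr]
  refine ((intervalIntegral.integrableOn_Ioo_rpow_iff hr).2
    (by linarith : -1 < s + finrank ℝ E - 1)).congr_fun (fun y hy ↦ ?_) measurableSet_Ioo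
  exact (Real.pow_sub_one_mul_rpow hy.1 finrank_pos s).symm

lemma setIntegral_ball_norm_rpow {s : ℝ} (hs : -(finrank ℝ E : ℝ) < s) {r : ℝ} (hr : 0 ≤ r) :
    ∫ w in ball (0 : E) r, ‖w‖ ^ s ∂μ =
      finrank ℝ E * μ.real (ball 0 1) * r ^ (s + finrank ℝ E) / (s + finrank ℝ E) := by
  have hind : (ball (0 : E) r).indicator (fun w ↦ ‖w‖ ^ s) =
      fun w ↦ (Iio r).indicator (fun y ↦ y ^ s) ‖w‖ := by
    ext w; simp [indicator]
  have hradial : ∫ y in Ioi (0 : ℝ), y ^ (finrank ℝ E - 1) • (Iio r).indicator (fun y ↦ y ^ s) y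
      = r ^ (s + finrank ℝ E) / (s + finrank ℝ E) := by
    simp only [smul_eq_mul, ← indicator_mul_right (Iio r) (fun y ↦ y ^ (finrank ℝ E - 1))]
    rw [setIntegral_indicator measurableSet_Iio, Ioi_inter_Iio,
      setIntegral_congr_fun measurableSet_Ioo
        (fun y hy ↦ Real.pow_sub_one_mul_rpow hy.1 finrank_pos s),
      ← integral_Ioc_eq_integral_Ioo, ← intervalIntegral.integral_of_le hr,
      integral_rpow (Or.inl (by linarith)), Real.zero_rpow (by linarith)]
    ring_nf
  rw [← integral_indicator measurableSet_ball, hind, integral_fun_norm_addHaar, hradial,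
    nsmul_eq_mul, smul_eq_mul]
  ring

lemma integral_norm_sub_rpow_mul_one_add_norm_rpow_le {a b δ : ℝ} (ha : 0 ≤ a)
    (had : a < finrank ℝ E) (hdb : finrank ℝ E < b) (hδ : 0 < δ) {x : E}
    (hδx : 2 * δ ≤ 1 + ‖x‖) :
    ∫ z, ‖x - z‖ ^ (-a) * (1 + ‖z‖) ^ (-b) ∂μ ≤
      finrank ℝ E * μ.real (ball 0 1) / (finrank ℝ E - a) * δ ^ (finrank ℝ E - a - b) +
        δ ^ (-a) * ∫ z, (1 + ‖z‖) ^ (-b) ∂μ := by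
  have hball : Integrable ((ball (0 : E) δ).indicator fun w ↦ ‖w‖ ^ (-a)) μ :=
    (integrable_indicator_iff measurableSet_ball).2 (integrableOn_ball_norm_rpow μ (by linarith) δ)
  have hnear := (hball.comp_sub_left x).const_mul (δ ^ (-b))
  have hfar := (integrable_one_add_norm (μ := μ) hdb).const_mul (δ ^ (-a))
  calc ∫ z, ‖x - z‖ ^ (-a) * (1 + ‖z‖) ^ (-b) ∂μ
      ≤ ∫ z, δ ^ (-b) * (ball 0 δ).indicator (fun w ↦ ‖w‖ ^ (-a)) (x - z)
          + δ ^ (-a) * (1 + ‖z‖) ^ (-b) ∂μ :=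
        integral_mono_of_nonneg (ae_of_all _ fun z ↦ by positivity) (hnear.add hfar)
          (ae_of_all _ (norm_sub_rpow_mul_one_add_norm_rpow_le ha (by linarith) hδ hδx))
    _ = δ ^ (-b) * (finrank ℝ E * μ.real (ball 0 1) * δ ^ (finrank ℝ E - a) / (finrank ℝ E - a))
          + δ ^ (-a) * ∫ z, (1 + ‖z‖) ^ (-b) ∂μ := by
        rw [integral_add hnear hfar, integral_const_mul, integral_const_mul,
          integral_sub_left_eq_self, integral_indicator measurableSet_ball,
          setIntegral_ball_norm_rpow μ (by linarith) hδ.le, neg_add_eq_sub]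
    _ = _ := by
        rw [show (finrank ℝ E : ℝ) - a - b = -b + (finrank ℝ E - a) by ring, Real.rpow_add hδ]
        ring

end Nontrivial

theorem exists_integral_norm_sub_rpow_mul_one_add_norm_rpow_le {a b : ℝ} (ha : 0 ≤ a)
    (had : a < finrank ℝ E) (hdb : finrank ℝ E < b) :
    ∃ C > 0, ∀ x : E, ∫ z, ‖x - z‖ ^ (-a) * (1 + ‖z‖) ^ (-b) ∂μ ≤ C * (1 + ‖x‖) ^ (-a) := by
  have : Nontrivial E := nontrivial_of_finrank_pos (R := ℝ) (by exact_mod_cast ha.trans_lt had)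
  set d : ℝ := (finrank ℝ E : ℝ)
  set K := d * μ.real (ball 0 1) / (d - a)
  set J := ∫ z, (1 + ‖z‖) ^ (-b) ∂μ
  have hK : 0 < K := by
    have : 0 < μ.real (ball 0 1) :=
      ENNReal.toReal_pos (measure_ball_pos μ 0 one_pos).ne' measure_ball_lt_top.ne
    have : 0 < d := ha.trans_lt had
    exact div_pos (by positivity) (by linarith)
  have hJ : 0 ≤ J := integral_nonneg fun z ↦ Real.rpow_nonneg (by positivity) _
  refine ⟨2 ^ a * (2 ^ (b - d) * K + J), by positivity, fun x ↦ ?_⟩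
  set δ := (1 + ‖x‖) / 2
  have hδ : 0 < δ := by positivity
  have hδa : δ ^ (-a) = 2 ^ a * (1 + ‖x‖) ^ (-a) := by
    rw [Real.div_rpow (by positivity) zero_le_two, Real.rpow_neg zero_le_two, div_inv_eq_mul]
    ring
  have hδb : δ ^ (d - a - b) ≤ 2 ^ (b - d) * δ ^ (-a) := by
    rw [show d - a - b = (d - b) + -a by ring, Real.rpow_add hδ,
      show b - d = -(d - b) by ring, Real.rpow_neg zero_le_two, ← Real.inv_rpow zero_le_two]
    refine mul_le_mul_of_nonneg_right (Real.rpow_le_rpow_of_nonpos (by norm_num) ?_ (by linarith))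
      (Real.rpow_nonneg hδ.le _)
    show (2 : ℝ)⁻¹ ≤ (1 + ‖x‖) / 2
    linarith [norm_nonneg x]
  calc ∫ z, ‖x - z‖ ^ (-a) * (1 + ‖z‖) ^ (-b) ∂μ
      ≤ K * δ ^ (d - a - b) + δ ^ (-a) * J :=
        integral_norm_sub_rpow_mul_one_add_norm_rpow_le μ ha had hdb hδ
          (mul_div_cancel₀ _ two_ne_zero).le
    _ ≤ K * (2 ^ (b - d) * δ ^ (-a)) + δ ^ (-a) * J := by gcongr
    _ = 2 ^ a * (2 ^ (b - d) * K + J) * (1 + ‖x‖) ^ (-a) := by rw [hδa]; ring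

end HaarMeasure

/-- Giraud-type convolution estimate: for `n ≥ 5` there is `C = C(n) > 0` with
`∫ |x-z|^(2-n) (1+|z|)^(-n-2) dz ≤ C (1+|x|)^(2-n)` for all `x ∈ ℝⁿ`. -/
theorem stmt_13 (n : ℕ) (hn : 5 ≤ n) :
    ∃ C > (0 : ℝ), ∀ x : EuclideanSpace ℝ (Fin n),
      (∫ z : EuclideanSpace ℝ (Fin n),
          ‖x - z‖ ^ ((2 : ℝ) - (n : ℝ)) * (1 + ‖z‖) ^ (-(n : ℝ) - 2))
        ≤ C * (1 + ‖x‖) ^ ((2 : ℝ) - (n : ℝ)) := by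
  have hnR : (5 : ℝ) ≤ n := by exact_mod_cast hn
  obtain ⟨C, hC, hbound⟩ := exists_integral_norm_sub_rpow_mul_one_add_norm_rpow_le
    (volume : Measure (EuclideanSpace ℝ (Fin n))) (a := n - 2) (b := n + 2) (by linarith)
    (by rw [finrank_euclideanSpace_fin]; linarith) (by rw [finrank_euclideanSpace_fin]; linarith)
  exact ⟨C, hC, by simpa only [neg_sub, neg_add'] using hbound⟩
end

section
/- Let $n \ge 7$ and $0 < \mu_j \le \mu_i$. With $U_{\mu,\xi}(x) = \mu^{-\frac{n-2}{2}}(1+\frac{|x-\xi|^2}{n(n-2)\mu^2})^{1-n/2}$ and any $\xi_i, \xi_j \in \mathbb{R}^n$, there is a constant $C = C(n)$ with $\int_{\mathbb{R}^n} U_{\mu_i,\xi_i}^{\frac{4}{n-2}}\, U_{\mu_j,\xi_j}^2\, dx \le C\, \Big(\frac{\mu_j}{\mu_i}\Big)^{2}\,$ if $n \ge 7$, and in particular this integral tends to $0$ when $\mu_j/\mu_i \to 0$. -/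
/-!
Since `U₀ ≤ 1`, the heavier bubble satisfies `U_{μᵢ,ξᵢ}^(4/(n-2)) ≤ μᵢ⁻²` pointwise, while by
scaling `∫ U_{μⱼ,ξⱼ}² = μⱼ² ∫ U₀²`, which is finite because `U₀² ≍ |x|^(4-2n)` is integrable on
`ℝⁿ` once `n ≥ 5`. Hence the interaction integral is at most `(∫ U₀²) (μⱼ/μᵢ)²`.
-/

open MeasureTheory Filter

/-- The standard bubble `U₀(x) = (1 + |x|²/(n(n-2)))^(1-n/2)` on `ℝⁿ`. -/
noncomputable def U0 (n : ℕ) (x : EuclideanSpace ℝ (Fin n)) : ℝ :=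
  (1 + ‖x‖ ^ 2 / ((n : ℝ) * ((n : ℝ) - 2))) ^ ((1 : ℝ) - (n : ℝ) / 2)

/-- The rescaled/translated bubble `U_{μ,ξ}(x) = μ^(-(n-2)/2) U₀((x-ξ)/μ)`. -/
noncomputable def Ubub (n : ℕ) (μ : ℝ) (ξ x : EuclideanSpace ℝ (Fin n)) : ℝ :=
  μ ^ (-(((n : ℝ) - 2) / 2)) * U0 n (μ⁻¹ • (x - ξ))

/-- The geometric Laplacian `Δ = -∑ᵢ ∂ᵢ²` on `ℝⁿ`. -/
noncomputable def lap {n : ℕ} (f : EuclideanSpace ℝ (Fin n) → ℝ)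
    (x : EuclideanSpace ℝ (Fin n)) : ℝ :=
  -∑ i : Fin n, fderiv ℝ (fun y => fderiv ℝ f y (EuclideanSpace.single i 1)) x
      (EuclideanSpace.single i 1)

section Bubble

variable {n : ℕ}

lemma one_le_U0_base (hn : 2 ≤ n) (x : EuclideanSpace ℝ (Fin n)) :
    1 ≤ 1 + ‖x‖ ^ 2 / ((n : ℝ) * ((n : ℝ) - 2)) := by
  have hn' : (2 : ℝ) ≤ n := by exact_mod_cast hn
  have : 0 ≤ ‖x‖ ^ 2 / ((n : ℝ) * ((n : ℝ) - 2)) :=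
    div_nonneg (sq_nonneg _) (mul_nonneg (by linarith) (by linarith))
  linarith

lemma U0_pos (hn : 2 ≤ n) (x : EuclideanSpace ℝ (Fin n)) : 0 < U0 n x :=
  Real.rpow_pos_of_pos (zero_lt_one.trans_le (one_le_U0_base hn x)) _

lemma U0_le_one (hn : 2 ≤ n) (x : EuclideanSpace ℝ (Fin n)) : U0 n x ≤ 1 := by
  have hn' : (2 : ℝ) ≤ n := by exact_mod_cast hn
  exact Real.rpow_le_one_of_one_le_of_nonpos (one_le_U0_base hn x) (by linarith)

lemma continuous_U0 (hn : 2 ≤ n) : Continuous (U0 n) :=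
  Continuous.rpow_const (by fun_prop) fun x =>
    Or.inl (zero_lt_one.trans_le (one_le_U0_base hn x)).ne'

-- The exponent is written `-r/2`, `r = 2(n-2)`, to match `integrable_rpow_neg_one_add_norm_sq`.
lemma U0_sq_eq (hn : 3 ≤ n) (x : EuclideanSpace ℝ (Fin n)) :
    U0 n x ^ 2 = (1 + ‖(√((n : ℝ) * ((n : ℝ) - 2)))⁻¹ • x‖ ^ 2) ^ (-(2 * ((n : ℝ) - 2)) / 2) := by
  have hn' : (3 : ℝ) ≤ n := by exact_mod_cast hn
  have hc : 0 ≤ (n : ℝ) * ((n : ℝ) - 2) := mul_nonneg (by linarith) (by linarith)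
  rw [norm_smul, mul_pow, norm_inv, Real.norm_eq_abs, abs_of_nonneg (Real.sqrt_nonneg _),
    inv_pow, Real.sq_sqrt hc, U0, ← Real.rpow_natCast (_ ^ _) 2,
    ← Real.rpow_mul (zero_le_one.trans (one_le_U0_base (by omega) x))]
  congr 1
  · ring
  · push_cast; ring

lemma integrable_U0_sq (hn : 5 ≤ n) :
    Integrable (fun x : EuclideanSpace ℝ (Fin n) => U0 n x ^ 2) := by
  have hn' : (5 : ℝ) ≤ n := by exact_mod_cast hn
  have hdim : (Module.finrank ℝ (EuclideanSpace ℝ (Fin n)) : ℝ) < 2 * ((n : ℝ) - 2) := by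
    rw [finrank_euclideanSpace_fin]; linarith
  have hc : 0 < √((n : ℝ) * ((n : ℝ) - 2)) :=
    Real.sqrt_pos.2 (mul_pos (by linarith) (by linarith))
  simp_rw [U0_sq_eq (by omega : 3 ≤ n)]
  exact (integrable_rpow_neg_one_add_norm_sq hdim).comp_smul (inv_ne_zero hc.ne')

lemma Ubub_pos (hn : 2 ≤ n) {μ : ℝ} (hμ : 0 < μ) (ξ x : EuclideanSpace ℝ (Fin n)) :
    0 < Ubub n μ ξ x :=
  mul_pos (Real.rpow_pos_of_pos hμ _) (U0_pos hn _)

lemma continuous_Ubub (hn : 2 ≤ n) (μ : ℝ) (ξ : EuclideanSpace ℝ (Fin n)) :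
    Continuous (Ubub n μ ξ) :=
  continuous_const.mul ((continuous_U0 hn).comp (by fun_prop))

lemma Ubub_le (hn : 2 ≤ n) {μ : ℝ} (hμ : 0 < μ) (ξ x : EuclideanSpace ℝ (Fin n)) :
    Ubub n μ ξ x ≤ μ ^ (-(((n : ℝ) - 2) / 2)) :=
  mul_le_of_le_one_right (Real.rpow_nonneg hμ.le _) (U0_le_one hn _)

lemma Ubub_rpow_le_inv_sq (hn : 3 ≤ n) {μ : ℝ} (hμ : 0 < μ) (ξ x : EuclideanSpace ℝ (Fin n)) :
    Ubub n μ ξ x ^ ((4 : ℝ) / ((n : ℝ) - 2)) ≤ (μ ^ 2)⁻¹ := by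
  have hn2 : (0 : ℝ) < (n : ℝ) - 2 := by
    have : (3 : ℝ) ≤ n := by exact_mod_cast hn
    linarith
  calc Ubub n μ ξ x ^ ((4 : ℝ) / ((n : ℝ) - 2))
      ≤ (μ ^ (-(((n : ℝ) - 2) / 2))) ^ ((4 : ℝ) / ((n : ℝ) - 2)) :=
        Real.rpow_le_rpow (Ubub_pos (by omega) hμ ξ x).le (Ubub_le (by omega) hμ ξ x)
          (by positivity)
    _ = μ ^ (-2 : ℝ) := by
        rw [← Real.rpow_mul hμ.le]
        congr 1
        field_simp
        norm_num
    _ = (μ ^ 2)⁻¹ := by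
        rw [Real.rpow_neg hμ.le, Real.rpow_two]

lemma Ubub_sq_eq {μ : ℝ} (hμ : 0 < μ) (ξ x : EuclideanSpace ℝ (Fin n)) :
    Ubub n μ ξ x ^ 2 = μ ^ ((2 : ℝ) - n) * U0 n (μ⁻¹ • (x - ξ)) ^ 2 := by
  rw [Ubub, mul_pow, ← Real.rpow_natCast (μ ^ _) 2, ← Real.rpow_mul hμ.le]
  congr 2
  push_cast
  ring

lemma integrable_Ubub_sq (hn : 5 ≤ n) {μ : ℝ} (hμ : 0 < μ) (ξ : EuclideanSpace ℝ (Fin n)) :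
    Integrable (fun x => Ubub n μ ξ x ^ 2) := by
  simp_rw [Ubub_sq_eq hμ ξ]
  exact (((integrable_U0_sq hn).comp_smul (inv_ne_zero hμ.ne')).comp_sub_right ξ).const_mul _

lemma integral_Ubub_sq {μ : ℝ} (hμ : 0 < μ) (ξ : EuclideanSpace ℝ (Fin n)) :
    ∫ x, Ubub n μ ξ x ^ 2 = μ ^ 2 * ∫ x, U0 n x ^ 2 := by
  simp_rw [Ubub_sq_eq hμ ξ]
  rw [integral_const_mul, integral_sub_right_eq_self (fun y => U0 n (μ⁻¹ • y) ^ 2) ξ,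
    Measure.integral_comp_inv_smul_of_nonneg volume (fun y => U0 n y ^ 2) hμ.le,
    finrank_euclideanSpace_fin, smul_eq_mul, ← mul_assoc, ← Real.rpow_natCast μ n,
    ← Real.rpow_add hμ, sub_add_cancel, Real.rpow_two]

lemma integral_Ubub_rpow_mul_Ubub_sq_le (hn : 5 ≤ n) {μi μj : ℝ} (hi : 0 < μi) (hj : 0 < μj)
    (ξi ξj : EuclideanSpace ℝ (Fin n)) :
    ∫ x, Ubub n μi ξi x ^ ((4 : ℝ) / ((n : ℝ) - 2)) * Ubub n μj ξj x ^ 2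
      ≤ (∫ x, U0 n x ^ 2) * (μj / μi) ^ 2 := by
  have hpt : ∀ x, Ubub n μi ξi x ^ ((4 : ℝ) / ((n : ℝ) - 2)) * Ubub n μj ξj x ^ 2
      ≤ (μi ^ 2)⁻¹ * Ubub n μj ξj x ^ 2 := fun x =>
    mul_le_mul_of_nonneg_right (Ubub_rpow_le_inv_sq (by omega) hi ξi x) (sq_nonneg _)
  have hmajorant := (integrable_Ubub_sq hn hj ξj).const_mul (μi ^ 2)⁻¹
  have hmeas : Continuous fun x =>
      Ubub n μi ξi x ^ ((4 : ℝ) / ((n : ℝ) - 2)) * Ubub n μj ξj x ^ 2 :=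
    ((continuous_Ubub (by omega) μi ξi).rpow_const fun x =>
      Or.inl (Ubub_pos (by omega) hi ξi x).ne').mul ((continuous_Ubub (by omega) μj ξj).pow 2)
  have hint : Integrable fun x =>
      Ubub n μi ξi x ^ ((4 : ℝ) / ((n : ℝ) - 2)) * Ubub n μj ξj x ^ 2 :=
    hmajorant.mono' hmeas.aestronglyMeasurable <| Eventually.of_forall fun x => by
      rw [Real.norm_of_nonneg (mul_nonneg (Real.rpow_nonneg (Ubub_pos (by omega) hi ξi x).le _)
        (sq_nonneg _))]
      exact hpt x
  calc _ ≤ ∫ x, (μi ^ 2)⁻¹ * Ubub n μj ξj x ^ 2 := integral_mono hint hmajorant hpt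
    _ = (∫ x, U0 n x ^ 2) * (μj / μi) ^ 2 := by
        rw [integral_const_mul, integral_Ubub_sq hj, div_pow]
        ring

end Bubble

/-- Interaction estimate between two bubbles of scales `μⱼ ≤ μᵢ`: for `n ≥ 7`,
`∫ U_{μᵢ,ξᵢ}^(4/(n-2)) U_{μⱼ,ξⱼ}² dx ≤ C(n) (μⱼ/μᵢ)²`; in particular the integral tends
to `0` along any family with `μⱼ/μᵢ → 0`. -/
theorem stmt_17 (n : ℕ) (hn : 7 ≤ n) :
    ∃ C > (0 : ℝ),
      (∀ (μi μj : ℝ) (ξi ξj : EuclideanSpace ℝ (Fin n)), 0 < μj → μj ≤ μi →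
        (∫ x : EuclideanSpace ℝ (Fin n),
            Ubub n μi ξi x ^ ((4 : ℝ) / ((n : ℝ) - 2)) * Ubub n μj ξj x ^ 2)
          ≤ C * (μj / μi) ^ 2) ∧
      (∀ (μ ν : ℕ → ℝ) (ξ η : ℕ → EuclideanSpace ℝ (Fin n)),
        (∀ m, 0 < ν m) → (∀ m, ν m ≤ μ m) →
        Tendsto (fun m => ν m / μ m) atTop (nhds 0) →
        Tendsto (fun m => ∫ x : EuclideanSpace ℝ (Fin n),
            Ubub n (μ m) (ξ m) x ^ ((4 : ℝ) / ((n : ℝ) - 2)) * Ubub n (ν m) (η m) x ^ 2)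
          atTop (nhds 0)) := by
  set I := ∫ x : EuclideanSpace ℝ (Fin n), U0 n x ^ 2
  have hI : 0 ≤ I := integral_nonneg fun x => sq_nonneg _
  have bound : ∀ (μi μj : ℝ) (ξi ξj : EuclideanSpace ℝ (Fin n)), 0 < μj → μj ≤ μi →
      ∫ x, Ubub n μi ξi x ^ ((4 : ℝ) / ((n : ℝ) - 2)) * Ubub n μj ξj x ^ 2
        ≤ (I + 1) * (μj / μi) ^ 2 := fun μi μj ξi ξj hj hij =>
    (integral_Ubub_rpow_mul_Ubub_sq_le (by omega) (hj.trans_le hij) hj ξi ξj).trans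
      (mul_le_mul_of_nonneg_right (by linarith) (sq_nonneg _))
  refine ⟨I + 1, by linarith, bound, fun μ ν ξ η hν hle hratio => ?_⟩
  have hlim : Tendsto (fun m => (I + 1) * (ν m / μ m) ^ 2) atTop (nhds 0) := by
    simpa using (hratio.pow 2).const_mul (I + 1)
  refine squeeze_zero (fun m => integral_nonneg fun x => ?_)
    (fun m => bound _ _ _ _ (hν m) (hle m)) hlim
  exact mul_nonneg (Real.rpow_nonneg (Ubub_pos (by omega) ((hν m).trans_le (hle m)) _ x).le _)
    (sq_nonneg _)
end

section
/- Let $n \ge 3$, let $B_1 = B(\xi_1, r_1) \supset B_2 = B(\xi_2, r_2)$ be Euclidean balls with $\xi_2 \in B_1$, and consider two bubbles $U_1 = U_{\mu_1, \xi_1}$, $U_2 = U_{\mu_2, \xi_2}$ with $0 < \mu_2 \le \mu_1$, where $r_2 = \sqrt{\mu_1 \mu_2}$, $|\xi_1 - \xi_2| \le \mu_1$, and $U_{\mu,\xi}(x) = \mu^{-\frac{n-2}{2}}(1 + \frac{|x-\xi|^2}{n(n-2)\mu^2})^{1-n/2}$. Then there exists $C = C(n) > 0$ independent of $\mu_1,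 \mu_2$ such that $U_2 \le C\, U_1$ on $B_1 \setminus B_2$ and $U_1 \le C\, U_2$ on $B_2$. -/
/-! Writing `c = n(n-2)` and `p = (n-2)/2`, a bubble is `U_{μ,ξ}(x) = (μ + |x-ξ|²/(cμ))^(-p)`,
so `U₂ ≤ K^p U₁` at `x` as soon as `μ₁ + |x-ξ₁|²/(cμ₁) ≤ K (μ₂ + |x-ξ₂|²/(cμ₂))`. Outside `B₂`,
where `|x-ξ₂|² ≥ μ₁μ₂`, both terms on the left are `O(|x-ξ₂|²/μ₂)` because `|ξ₁-ξ₂| ≤ μ₁`;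
inside `B₂` the left side of the reverse comparison is at most `μ₂ + μ₁/c = O(μ₁)`. -/

open MeasureTheory Filter

noncomputable def bubbleProfile (c μ d : ℝ) : ℝ := μ + d ^ 2 / (c * μ)

theorem bubbleProfile_pos {c μ : ℝ} (hc : 0 ≤ c) (hμ : 0 < μ) (d : ℝ) :
    0 < bubbleProfile c μ d := by
  unfold bubbleProfile
  positivity

theorem Ubub_eq_rpow_neg {n : ℕ} (hn : 3 ≤ n) {μ : ℝ} (hμ : 0 < μ)
    (ξ x : EuclideanSpace ℝ (Fin n)) :
    Ubub n μ ξ x = bubbleProfile ((n : ℝ) * ((n : ℝ) - 2)) μ ‖x - ξ‖ ^ (-(((n : ℝ) - 2) / 2)) := by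
  have hn' : (3 : ℝ) ≤ n := by exact_mod_cast hn
  have hc : (0 : ℝ) < (n : ℝ) * ((n : ℝ) - 2) := by nlinarith
  unfold Ubub U0 bubbleProfile
  rw [show (1 : ℝ) - (n : ℝ) / 2 = -(((n : ℝ) - 2) / 2) by ring,
    ← Real.mul_rpow hμ.le (by positivity), norm_smul, norm_inv, Real.norm_of_nonneg hμ.le]
  congr 1
  field_simp

theorem Real.rpow_neg_le_rpow_mul_rpow_neg_of_le_mul {a b K p : ℝ} (ha : 0 < a) (hb : 0 < b)
    (hK : 0 < K) (hp : 0 ≤ p) (h : a ≤ K * b) : b ^ (-p) ≤ K ^ p * a ^ (-p) :=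
  calc b ^ (-p) = K ^ p * (K * b) ^ (-p) := by
        rw [Real.mul_rpow hK.le hb.le, ← mul_assoc, ← Real.rpow_add hK, add_neg_cancel,
          Real.rpow_zero, one_mul]
    _ ≤ K ^ p * a ^ (-p) :=
        mul_le_mul_of_nonneg_left (Real.rpow_le_rpow_of_nonpos ha h (neg_nonpos.2 hp))
          (by positivity)

theorem Ubub_le_rpow_mul_of_le {n : ℕ} (hn : 3 ≤ n) {μ₁ μ₂ K : ℝ} (hμ₁ : 0 < μ₁) (hμ₂ : 0 < μ₂)
    (hK : 0 < K) {ξ₁ ξ₂ x : EuclideanSpace ℝ (Fin n)}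
    (h : bubbleProfile ((n : ℝ) * ((n : ℝ) - 2)) μ₁ ‖x - ξ₁‖
      ≤ K * bubbleProfile ((n : ℝ) * ((n : ℝ) - 2)) μ₂ ‖x - ξ₂‖) :
    Ubub n μ₂ ξ₂ x ≤ K ^ (((n : ℝ) - 2) / 2) * Ubub n μ₁ ξ₁ x := by
  have hn' : (3 : ℝ) ≤ n := by exact_mod_cast hn
  have hc : (0 : ℝ) < (n : ℝ) * ((n : ℝ) - 2) := by nlinarith
  rw [Ubub_eq_rpow_neg hn hμ₁, Ubub_eq_rpow_neg hn hμ₂]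
  exact Real.rpow_neg_le_rpow_mul_rpow_neg_of_le_mul (bubbleProfile_pos hc.le hμ₁ _)
    (bubbleProfile_pos hc.le hμ₂ _) hK (by linarith) h

section Profile

variable {c μ₁ μ₂ d₁ d₂ : ℝ}

theorem bubbleProfile_le_of_mul_le_sq (hc : 0 < c) (hμ₂ : 0 < μ₂) (hμ₁₂ : μ₂ ≤ μ₁)
    (hfar : μ₁ * μ₂ ≤ d₂ ^ 2) (hd₁ : 0 ≤ d₁) (hd₁₂ : d₁ ≤ d₂ + μ₁) :
    bubbleProfile c μ₁ d₁ ≤ (c + 4) * bubbleProfile c μ₂ d₂ := by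
  unfold bubbleProfile
  have hμ₁ : 0 < μ₁ := hμ₂.trans_le hμ₁₂
  have hμ₁_le : μ₁ ≤ d₂ ^ 2 / μ₂ := (le_div_iff₀ hμ₂).2 hfar
  have hd₂_div : d₂ ^ 2 / μ₁ ≤ d₂ ^ 2 / μ₂ := div_le_div_of_nonneg_left (sq_nonneg _) hμ₂ hμ₁₂
  have hd₁_div : d₁ ^ 2 / μ₁ ≤ 4 * (d₂ ^ 2 / μ₂) :=
    calc d₁ ^ 2 / μ₁ ≤ (2 * d₂ ^ 2 + 2 * μ₁ ^ 2) / μ₁ := by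
          gcongr; nlinarith [pow_le_pow_left₀ hd₁ hd₁₂ 2, sq_nonneg (d₂ - μ₁)]
      _ = 2 * (d₂ ^ 2 / μ₁) + 2 * μ₁ := by field_simp
      _ ≤ 4 * (d₂ ^ 2 / μ₂) := by linarith
  calc μ₁ + d₁ ^ 2 / (c * μ₁) = μ₁ + d₁ ^ 2 / μ₁ / c := by rw [div_div, mul_comm μ₁]
    _ ≤ d₂ ^ 2 / μ₂ + 4 * (d₂ ^ 2 / μ₂) / c := by gcongr
    _ = (c + 4) * (d₂ ^ 2 / (c * μ₂)) := by field_simp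
    _ ≤ (c + 4) * (μ₂ + d₂ ^ 2 / (c * μ₂)) := by gcongr; linarith

theorem bubbleProfile_le_of_sq_le_mul (hc : 0 < c) (hμ₂ : 0 < μ₂) (hμ₁₂ : μ₂ ≤ μ₁)
    (hnear : d₂ ^ 2 ≤ μ₁ * μ₂) :
    bubbleProfile c μ₂ d₂ ≤ (1 + 1 / c) * bubbleProfile c μ₁ d₁ := by
  unfold bubbleProfile
  have hμ₁ : 0 < μ₁ := hμ₂.trans_le hμ₁₂
  calc μ₂ + d₂ ^ 2 / (c * μ₂) ≤ μ₁ + μ₁ * μ₂ / (c * μ₂) := by gcongr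
    _ = (1 + 1 / c) * μ₁ := by field_simp
    _ ≤ (1 + 1 / c) * (μ₁ + d₁ ^ 2 / (c * μ₁)) := by
        gcongr
        exact le_add_of_nonneg_right (by positivity)

end Profile

/-- Radius of influence: with `B₂ = B(ξ₂, √(μ₁μ₂)) ⊆ B₁ = B(ξ₁, r₁)`, `ξ₂ ∈ B₁`,
`0 < μ₂ ≤ μ₁` and `|ξ₁ - ξ₂| ≤ μ₁`, there is `C = C(n)` independent of `μ₁, μ₂` with
`U₂ ≤ C U₁` on `B₁ \ B₂` and `U₁ ≤ C U₂` on `B₂`. -/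
theorem stmt_18 (n : ℕ) (hn : 3 ≤ n) :
    ∃ C > (0 : ℝ), ∀ (μ1 μ2 r1 : ℝ) (ξ1 ξ2 : EuclideanSpace ℝ (Fin n)),
      0 < μ2 → μ2 ≤ μ1 → ‖ξ1 - ξ2‖ ≤ μ1 →
      Metric.ball ξ2 (Real.sqrt (μ1 * μ2)) ⊆ Metric.ball ξ1 r1 →
      ξ2 ∈ Metric.ball ξ1 r1 →
      (∀ x ∈ Metric.ball ξ1 r1 \ Metric.ball ξ2 (Real.sqrt (μ1 * μ2)),
        Ubub n μ2 ξ2 x ≤ C * Ubub n μ1 ξ1 x) ∧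
      (∀ x ∈ Metric.ball ξ2 (Real.sqrt (μ1 * μ2)),
        Ubub n μ1 ξ1 x ≤ C * Ubub n μ2 ξ2 x) := by
  have hn' : (3 : ℝ) ≤ n := by exact_mod_cast hn
  set c : ℝ := (n : ℝ) * ((n : ℝ) - 2)
  have hc : 3 ≤ c := by nlinarith
  refine ⟨(c + 4) ^ (((n : ℝ) - 2) / 2), by positivity, ?_⟩
  intro μ1 μ2 r1 ξ1 ξ2 hμ2 hμ12 hξ _ _
  have hμ1 : 0 < μ1 := hμ2.trans_le hμ12
  refine ⟨fun x hx => ?_, fun x hx => ?_⟩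
  · have hfar : μ1 * μ2 ≤ ‖x - ξ2‖ ^ 2 := by
      simpa [dist_eq_norm, Real.sqrt_le_iff] using hx.2
    have htri : ‖x - ξ1‖ ≤ ‖x - ξ2‖ + μ1 := by
      linarith [norm_sub_le_norm_sub_add_norm_sub x ξ2 ξ1, norm_sub_rev ξ2 ξ1]
    exact Ubub_le_rpow_mul_of_le hn hμ1 hμ2 (by linarith)
      (bubbleProfile_le_of_mul_le_sq (by linarith) hμ2 hμ12 hfar (norm_nonneg _) htri)
  · have hnear : ‖x - ξ2‖ ^ 2 ≤ μ1 * μ2 := by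
      rw [Metric.mem_ball, dist_eq_norm, Real.lt_sqrt (norm_nonneg _)] at hx
      exact hx.le
    have hK : 1 + 1 / c ≤ c + 4 := by
      have : 1 / c ≤ 1 := by rw [div_le_one (by linarith)]; linarith
      linarith
    refine Ubub_le_rpow_mul_of_le hn hμ2 hμ1 (by linarith) ?_
    exact (bubbleProfile_le_of_sq_le_mul (by linarith) hμ2 hμ12 hnear).trans
      (mul_le_mul_of_nonneg_right hK (bubbleProfile_pos (by linarith) hμ1 _).le)
end
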